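/- Let Ω₁ be a σ-compact metric space, Ω₂ a metric space, f : Ω₁ → Ω₂ Lipschitz, μ a Radon measure on Ω₁, and α ≥ 0 such that μH^α(B) ≤ μ(B) for all Borel sets B ⊆ Ω₁. Then for every Borel set A ⊆ Ω₁, the image f(A) is μH^α-measurable in Ω₂. -/

import Mathlib

/-!
Inner regularity lets us write a Borel set `A` as `S ∪ (A \ S)` with `S` σ-compact and
`μ (A \ S) = 0`. The image `f '' S` is σ-compact, hence Borel. By hypothesis
`μH[α] (A \ S) ≤ μ (A \ S) = 0`, and a Lipschitz map sends `μH[α]`-null sets to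
`μH[α]`-null sets, so `f '' (A \ S)` is null.
-/

open MeasureTheory Set NNReal ENNReal

section SigmaCompact

variable {X : Type*} [TopologicalSpace X] [T2Space X] [MeasurableSpace X]
  [OpensMeasurableSpace X]

theorem IsSigmaCompact.measurableSet {s : Set X} (hs : IsSigmaCompact s) : MeasurableSet s := by
  obtain ⟨K, hK, rfl⟩ := hs
  exact .iUnion fun n => (hK n).measurableSet

variable {μ : Measure X} [μ.InnerRegularCompactLTTop]

theorem MeasurableSet.exists_isSigmaCompact_subset_measure_sdiff_eq_zero_of_ne_top {A : Set X}
    (hA : MeasurableSet A) (hμA : μ A ≠ ∞) :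
    ∃ S ⊆ A, IsSigmaCompact S ∧ μ (A \ S) = 0 := by
  choose K hKA hK hμK using fun n : ℕ =>
    hA.exists_isCompact_sdiff_lt hμA (ENNReal.inv_ne_zero.2 (natCast_ne_top n))
  refine ⟨⋃ n, K n, iUnion_subset hKA, isSigmaCompact_iUnion_of_isCompact K hK, ?_⟩
  have hle : ∀ n : ℕ, μ (A \ ⋃ n, K n) ≤ (n : ℝ≥0∞)⁻¹ := fun n =>
    (measure_mono (sdiff_subset_sdiff_right (subset_iUnion K n))).trans (hμK n).le
  exact le_antisymm (ge_of_tendsto' ENNReal.tendsto_inv_nat_nhds_zero hle) zero_le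

theorem MeasurableSet.exists_isSigmaCompact_subset_measure_sdiff_eq_zero [SigmaFinite μ]
    {A : Set X} (hA : MeasurableSet A) :
    ∃ S ⊆ A, IsSigmaCompact S ∧ μ (A \ S) = 0 := by
  have hμA : ∀ n, μ (A ∩ spanningSets μ n) ≠ ∞ := fun n =>
    (measure_inter_lt_top_of_right_ne_top (measure_spanningSets_lt_top μ n).ne).ne
  choose S hSA hS hμS using fun n =>
    MeasurableSet.exists_isSigmaCompact_subset_measure_sdiff_eq_zero_of_ne_top
      (hA.inter (measurableSet_spanningSets μ n)) (hμA n)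
  refine ⟨⋃ n, S n, iUnion_subset fun n => (hSA n).trans inter_subset_left,
    isSigmaCompact_iUnion S hS, measure_mono_null ?_ (measure_iUnion_null hμS)⟩
  intro x ⟨hxA, hxS⟩
  obtain ⟨n, hn⟩ := mem_iUnion.1 (iUnion_spanningSets μ ▸ mem_univ x)
  exact mem_iUnion.2 ⟨n, ⟨hxA, hn⟩, fun hx => hxS (mem_iUnion.2 ⟨n, hx⟩)⟩

end SigmaCompact

theorem LipschitzWith.hausdorffMeasure_image_null {X Y : Type*} [EMetricSpace X]
    [MeasurableSpace X] [BorelSpace X] [EMetricSpace Y] [MeasurableSpace Y] [BorelSpace Y]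
    {K : ℝ≥0} {f : X → Y} (hf : LipschitzWith K f) {d : ℝ} (hd : 0 ≤ d) {s : Set X}
    (hs : μH[d] s = 0) : μH[d] (f '' s) = 0 :=
  le_antisymm ((hf.hausdorffMeasure_image_le hd s).trans_eq (by rw [hs, mul_zero])) zero_le

theorem stmt8 {Ω₁ Ω₂ : Type*} [MetricSpace Ω₁] [MeasurableSpace Ω₁] [BorelSpace Ω₁]
    [SigmaCompactSpace Ω₁]
    [MetricSpace Ω₂] [MeasurableSpace Ω₂] [BorelSpace Ω₂]
    (f : Ω₁ → Ω₂) (L : ℝ≥0) (hf : LipschitzWith L f)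
    (μ : Measure Ω₁) [μ.Regular] (α : ℝ) (hα : 0 ≤ α)
    (hle : ∀ B : Set Ω₁, MeasurableSet B → μH[α] B ≤ μ B)
    (A : Set Ω₁) (hA : MeasurableSet A) :
    NullMeasurableSet (f '' A) (μH[α] : Measure Ω₂) := by
  obtain ⟨S, hSA, hS, hμS⟩ := hA.exists_isSigmaCompact_subset_measure_sdiff_eq_zero (μ := μ)
  have hnull : μH[α] (A \ S) = 0 :=
    nonpos_iff_eq_zero.1 (hμS ▸ hle _ (hA.diff hS.measurableSet))
  rw [← union_sdiff_cancel hSA, image_union]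
  exact (hS.image hf.continuous).measurableSet.nullMeasurableSet.union
    (.of_null (hf.hausdorffMeasure_image_null hα hnull))
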